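/- Every graph in the family 𝒢_sc that is not a 2-tree admits a NAC-colouring. -/
import Mathlib


open scoped Classical

namespace NAC

variable {V : Type*}

/-- Number of edges of `G` in the list `l` whose colour under `c` is `b`. -/
noncomputable def cCount (G : SimpleGraph V) (c : G.edgeSet → Bool) (b : Bool)
    (l : List (Sym2 V)) : ℕ :=
  (l.filter fun e => decide (∃ h : e ∈ G.edgeSet, c ⟨e, h⟩ = b)).length

/-- `c` is a NAC-colouring of `G`: it is surjective (both colours are used) and no
cycle of `G` contains exactly one edge of either colour. -/
def IsNAC (G : SimpleGraph V) (c : G.edgeSet → Bool) : Prop :=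
  Function.Surjective c ∧
  ∀ ⦃u : V⦄ (w : G.Walk u u), w.IsCycle →
    cCount G c true w.edges ≠ 1 ∧ cCount G c false w.edges ≠ 1

/-- The number of NAC-colourings of `G`, divided by two. -/
noncomputable def nacNum (G : SimpleGraph V) : ℕ :=
  {c : G.edgeSet → Bool | IsNAC G c}.ncard / 2

end NAC

namespace NAC

/-- `G'` on `Fin (n + k)` is obtained from `G` on `Fin n` by adding `k` new vertices and
exactly the edges in the list `L`. -/
def ExtendsBy {n k : ℕ} (G : SimpleGraph (Fin n)) (G' : SimpleGraph (Fin (n + k)))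
    (L : List (Fin (n + k) × Fin (n + k))) : Prop :=
  ∀ x y : Fin (n + k), G'.Adj x y ↔
    ((∃ hx : x.val < n, ∃ hy : y.val < n, G.Adj ⟨x.val, hx⟩ ⟨y.val, hy⟩) ∨
      (x, y) ∈ L ∨ (y, x) ∈ L)

/-- 2-trees: graphs obtained from a single edge by repeatedly adding a new vertex joined
to both endpoints of an existing edge. -/
inductive IsTwoTree : ∀ {n : ℕ}, SimpleGraph (Fin n) → Prop
  | base : IsTwoTree (⊤ : SimpleGraph (Fin 2))
  | glue {n : ℕ} {G : SimpleGraph (Fin n)} {G' : SimpleGraph (Fin (n + 1))}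
      (hG : IsTwoTree G) (u v : Fin n) (huv : G.Adj u v)
      (hext : ExtendsBy G G' [(u.castAdd 1, Fin.last n), (v.castAdd 1, Fin.last n)]) :
      IsTwoTree G'

end NAC

namespace NAC

/-- The family `𝒢_sc`: graphs obtained from a single edge by repeatedly gluing a
3-cycle along an edge, or a 3-prism along an edge (of either kind) or along a 3-cycle. -/
inductive GSC : ∀ {n : ℕ}, SimpleGraph (Fin n) → Prop
  | base : GSC (⊤ : SimpleGraph (Fin 2))
  /-- glue a triangle along the edge `uv` -/
  | triEdge {n : ℕ} {G : SimpleGraph (Fin n)} {G' : SimpleGraph (Fin (n + 1))}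
      (hG : GSC G) (u v : Fin n) (huv : G.Adj u v)
      (hext : ExtendsBy G G' [(u.castAdd 1, Fin.last n), (v.castAdd 1, Fin.last n)]) :
      GSC G'
  /-- glue a 3-prism along the edge `uv`, identified with a matching edge of the prism;
  the new vertices `n, n+1` form a triangle with `u` and `n+2, n+3` one with `v`. -/
  | prismMatchEdge {n : ℕ} {G : SimpleGraph (Fin n)} {G' : SimpleGraph (Fin (n + 4))}
      (hG : GSC G) (u v : Fin n) (huv : G.Adj u v)
      (hext : ExtendsBy G G'
        [(u.castAdd 4, ⟨n, by omega⟩), (u.castAdd 4, ⟨n + 1, by omega⟩),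
         ((⟨n, by omega⟩ : Fin (n + 4)), ⟨n + 1, by omega⟩),
         (v.castAdd 4, ⟨n + 2, by omega⟩), (v.castAdd 4, ⟨n + 3, by omega⟩),
         ((⟨n + 2, by omega⟩ : Fin (n + 4)), ⟨n + 3, by omega⟩),
         ((⟨n, by omega⟩ : Fin (n + 4)), ⟨n + 2, by omega⟩),
         ((⟨n + 1, by omega⟩ : Fin (n + 4)), ⟨n + 3, by omega⟩)]) :
      GSC G'
  /-- glue a 3-prism along the edge `uv`, identified with a triangle edge of the prism;
  the new vertex `n` completes the triangle `u v n`, the new vertices `n+1, n+2, n+3` form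
  the other triangle, matched to `u`, `v` and `n` respectively. -/
  | prismTriEdge {n : ℕ} {G : SimpleGraph (Fin n)} {G' : SimpleGraph (Fin (n + 4))}
      (hG : GSC G) (u v : Fin n) (huv : G.Adj u v)
      (hext : ExtendsBy G G'
        [(u.castAdd 4, ⟨n, by omega⟩), (v.castAdd 4, ⟨n, by omega⟩),
         ((⟨n + 1, by omega⟩ : Fin (n + 4)), ⟨n + 2, by omega⟩),
         ((⟨n + 2, by omega⟩ : Fin (n + 4)), ⟨n + 3, by omega⟩),
         ((⟨n + 1, by omega⟩ : Fin (n + 4)), ⟨n + 3, by omega⟩),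
         (u.castAdd 4, ⟨n + 1, by omega⟩), (v.castAdd 4, ⟨n + 2, by omega⟩),
         ((⟨n, by omega⟩ : Fin (n + 4)), ⟨n + 3, by omega⟩)]) :
      GSC G'
  /-- glue a 3-prism along the 3-cycle `u v w`, identified with one triangle of the prism;
  the new vertices `n, n+1, n+2` form the other triangle, matched to `u`, `v`, `w`. -/
  | prismTriangle {n : ℕ} {G : SimpleGraph (Fin n)} {G' : SimpleGraph (Fin (n + 3))}
      (hG : GSC G) (u v w : Fin n) (huv : G.Adj u v) (hvw : G.Adj v w) (hwu : G.Adj w u)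
      (hext : ExtendsBy G G'
        [((⟨n, by omega⟩ : Fin (n + 3)), ⟨n + 1, by omega⟩),
         ((⟨n + 1, by omega⟩ : Fin (n + 3)), ⟨n + 2, by omega⟩),
         ((⟨n, by omega⟩ : Fin (n + 3)), ⟨n + 2, by omega⟩),
         (u.castAdd 3, ⟨n, by omega⟩), (v.castAdd 3, ⟨n + 1, by omega⟩),
         (w.castAdd 3, ⟨n + 2, by omega⟩)]) :
      GSC G'

end NAC

namespace NAC

variable {V : Type*}

/-- A pair of vertex labellings witnessing a "cut-type" NAC-colouring: every edge
changes exactly one of the two labels, and both kinds of edges occur. -/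
def Good (G : SimpleGraph V) : Prop :=
  ∃ f g : V → ℕ,
    (∀ ⦃x y⦄, G.Adj x y → ((f x ≠ f y) ↔ g x = g y)) ∧
    (∃ x y, G.Adj x y ∧ f x ≠ f y) ∧ (∃ x y, G.Adj x y ∧ f x = f y)

lemma cCount_cons {G : SimpleGraph V} {c : G.edgeSet → Bool} {b : Bool}
    {x z : V} (hadj : G.Adj x z) (l : List (Sym2 V)) :
    cCount G c b (s(x, z) :: l) =
      (if c ⟨s(x, z), hadj⟩ = b then 1 else 0) + cCount G c b l := by
  unfold cCount
  rw [List.filter_cons]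
  have hmem : s(x, z) ∈ G.edgeSet := hadj
  by_cases hc : c ⟨s(x, z), hadj⟩ = b
  · rw [if_pos (decide_eq_true ⟨hmem, hc⟩), if_pos hc]
    simp [Nat.add_comm]
  · rw [if_neg (by simp only [decide_eq_true_eq]; rintro ⟨_, h⟩; exact hc h), if_neg hc]
    simp

lemma walk_count {G : SimpleGraph V} (c : G.edgeSet → Bool) (b : Bool) (h : V → ℕ)
    (hc : ∀ ⦃x y⦄ (hadj : G.Adj x y), c ⟨s(x, y), hadj⟩ = b ↔ h x ≠ h y) :
    ∀ {x y : V} (w : G.Walk x y),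
      (cCount G c b w.edges = 0 → h x = h y) ∧ (cCount G c b w.edges = 1 → h x ≠ h y) := by
  intro x y w
  induction w with
  | nil => exact ⟨fun _ => rfl, fun h1 => by simp [cCount] at h1⟩
  | cons hadj w ih =>
    rename_i a bb cc
    rw [SimpleGraph.Walk.edges_cons, cCount_cons hadj]
    by_cases hd : h a = h bb
    · have : ¬ (c ⟨s(a, bb), hadj⟩ = b) := by
        rw [hc hadj]; simpa using hd
      rw [if_neg this]
      simp only [Nat.zero_add]
      exact ⟨fun h0 => hd.trans (ih.1 h0), fun h1 hq => (ih.2 h1) (hd ▸ hq)⟩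
    · have : c ⟨s(a, bb), hadj⟩ = b := (hc hadj).2 hd
      rw [if_pos this]
      constructor
      · intro h0; omega
      · intro h1
        have h0 : cCount G c b w.edges = 0 := by omega
        have := ih.1 h0
        intro hq; exact hd (hq.trans this.symm)

lemma good_isNAC {G : SimpleGraph V} (hg : Good G) : ∃ c : G.edgeSet → Bool, IsNAC G c := by
  obtain ⟨f, g, hfg, ⟨x1, y1, ha1, hr⟩, ⟨x2, y2, ha2, hbl⟩⟩ := hg
  set c : G.edgeSet → Bool :=
    fun e => Sym2.lift ⟨fun a b => decide (f a ≠ f b), fun a b => by simp [ne_comm]⟩ e.1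
    with hcdef
  have hcv : ∀ ⦃x y⦄ (hadj : G.Adj x y), c ⟨s(x, y), hadj⟩ = decide (f x ≠ f y) := by
    intro x y hadj; simp [hcdef]
  have hct : ∀ ⦃x y⦄ (hadj : G.Adj x y), (c ⟨s(x, y), hadj⟩ = true ↔ f x ≠ f y) := by
    intro x y hadj; rw [hcv hadj]; simp
  have hcf : ∀ ⦃x y⦄ (hadj : G.Adj x y), (c ⟨s(x, y), hadj⟩ = false ↔ g x ≠ g y) := by
    intro x y hadj; rw [hcv hadj]
    simp only [decide_eq_false_iff_not, not_not]
    constructor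
    · intro hfe hge; exact ((hfg hadj).2 hge) hfe
    · intro hge; by_contra hfe; exact hge ((hfg hadj).1 hfe)
  refine ⟨c, ?_, ?_⟩
  · intro b
    cases b
    · refine ⟨⟨s(x2, y2), ha2⟩, (hcf ha2).2 ?_⟩
      intro hge; exact ((hfg ha2).2 hge) hbl
    · exact ⟨⟨s(x1, y1), ha1⟩, (hct ha1).2 hr⟩
  · intro u w _
    constructor
    · intro h1; exact (walk_count c true f hct w).2 h1 rfl
    · intro h1; exact (walk_count c false g hcf w).2 h1 rfl

lemma ExtendsBy.adj_of_adj {n k : ℕ} {G : SimpleGraph (Fin n)}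
    {G' : SimpleGraph (Fin (n + k))} {L} (hext : ExtendsBy G G' L) {x y : Fin n}
    (h : G.Adj x y) : G'.Adj (x.castAdd k) (y.castAdd k) :=
  (hext _ _).2 (Or.inl ⟨x.isLt, y.isLt, h⟩)

set_option maxHeartbeats 2000000 in
lemma gsc_good : ∀ {n : ℕ} {G : SimpleGraph (Fin n)}, GSC G → IsTwoTree G ∨ Good G := by
  intro n G hG
  induction hG with
  | base => exact Or.inl IsTwoTree.base
  | @triEdge n G G' hG u v huv hext ih =>
    rcases ih with h2t | ⟨f, g, hfg, ⟨x1, y1, ha1, hr⟩, ⟨x2, y2, ha2, hbl⟩⟩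
    · exact Or.inl (IsTwoTree.glue h2t u v huv hext)
    right
    by_cases hred : f u = f v
    · -- `uv` is blue
      have hguv : g u ≠ g v := fun h => ((hfg huv).2 h) hred
      set F : Fin (n+1) → ℕ := fun x => if hx : x.val < n then f ⟨x.val, hx⟩ else f u
        with hFdef
      set Gg : Fin (n+1) → ℕ :=
        fun x => if hx : x.val < n then g ⟨x.val, hx⟩ else g u + g v + 1 with hGdef
      have hFc : ∀ z : Fin n, F (z.castAdd 1) = f z := fun z => dif_pos z.isLt
      have hGc : ∀ z : Fin n, Gg (z.castAdd 1) = g z := fun z => dif_pos z.isLt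
      have hFt : F (Fin.last n) = f u := dif_neg (lt_irrefl n)
      have hGt : Gg (Fin.last n) = g u + g v + 1 := dif_neg (lt_irrefl n)
      refine ⟨F, Gg, ?_, ⟨x1.castAdd 1, y1.castAdd 1, hext.adj_of_adj ha1,
        by rw [hFc, hFc]; exact hr⟩, ⟨x2.castAdd 1, y2.castAdd 1, hext.adj_of_adj ha2,
        by rw [hFc, hFc]; exact hbl⟩⟩
      intro x y hxy
      rw [hext] at hxy
      rcases hxy with ⟨hx, hy, hadj⟩ | hmem | hmem
      · show (dite _ _ _ ≠ dite _ _ _) ↔ (dite _ _ _ = dite _ _ _)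
        rw [dif_pos hx, dif_pos hy, dif_pos hx, dif_pos hy]
        exact hfg hadj
      · simp only [List.mem_cons, List.not_mem_nil, or_false, Prod.mk.injEq] at hmem
        rcases hmem with ⟨rfl, rfl⟩ | ⟨rfl, rfl⟩ <;>
          rw [hFc, hFt, hGc, hGt] <;> omega
      · simp only [List.mem_cons, List.not_mem_nil, or_false, Prod.mk.injEq] at hmem
        rcases hmem with ⟨rfl, rfl⟩ | ⟨rfl, rfl⟩ <;>
          rw [hFc, hFt, hGc, hGt] <;> omega
    · -- `uv` is red
      have hguv : g u = g v := (hfg huv).1 hred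
      set F : Fin (n+1) → ℕ :=
        fun x => if hx : x.val < n then f ⟨x.val, hx⟩ else f u + f v + 1 with hFdef
      set Gg : Fin (n+1) → ℕ :=
        fun x => if hx : x.val < n then g ⟨x.val, hx⟩ else g u with hGdef
      have hFc : ∀ z : Fin n, F (z.castAdd 1) = f z := fun z => dif_pos z.isLt
      have hGc : ∀ z : Fin n, Gg (z.castAdd 1) = g z := fun z => dif_pos z.isLt
      have hFt : F (Fin.last n) = f u + f v + 1 := dif_neg (lt_irrefl n)
      have hGt : Gg (Fin.last n) = g u := dif_neg (lt_irrefl n)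
      refine ⟨F, Gg, ?_, ⟨x1.castAdd 1, y1.castAdd 1, hext.adj_of_adj ha1,
        by rw [hFc, hFc]; exact hr⟩, ⟨x2.castAdd 1, y2.castAdd 1, hext.adj_of_adj ha2,
        by rw [hFc, hFc]; exact hbl⟩⟩
      intro x y hxy
      rw [hext] at hxy
      rcases hxy with ⟨hx, hy, hadj⟩ | hmem | hmem
      · show (dite _ _ _ ≠ dite _ _ _) ↔ (dite _ _ _ = dite _ _ _)
        rw [dif_pos hx, dif_pos hy, dif_pos hx, dif_pos hy]
        exact hfg hadj
      · simp only [List.mem_cons, List.not_mem_nil, or_false, Prod.mk.injEq] at hmem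
        rcases hmem with ⟨rfl, rfl⟩ | ⟨rfl, rfl⟩ <;>
          rw [hFc, hFt, hGc, hGt] <;> omega
      · simp only [List.mem_cons, List.not_mem_nil, or_false, Prod.mk.injEq] at hmem
        rcases hmem with ⟨rfl, rfl⟩ | ⟨rfl, rfl⟩ <;>
          rw [hFc, hFt, hGc, hGt] <;> omega
  | @prismMatchEdge n G G' hG u v huv hext ih =>
    right
    have hune : (u : ℕ) ≠ (v : ℕ) := fun h => huv.ne (Fin.ext h)
    have hu := u.isLt
    have hv := v.isLt
    refine ⟨fun x => if x.val < n then x.val else if x.val < n + 2 then (u : ℕ) else (v : ℕ),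
        fun x => if x.val < n then 0 else if x.val = n ∨ x.val = n + 2 then 1 else 2,
        ?_,
        ⟨u.castAdd 4, v.castAdd 4, hext.adj_of_adj huv, by
          simp only [Fin.coe_castAdd, Fin.val_mk, true_or, or_true, if_true, lt_irrefl, lt_self_iff_false, if_false, false_or, or_false]
          split_ifs <;> ((try simp only [iff_false, iff_true, false_iff, true_iff, ne_eq, not_not, not_true, not_false_eq_true]) <;> omega)⟩,
        ⟨u.castAdd 4, ⟨n, by omega⟩, (hext _ _).2 (Or.inr (Or.inl (List.Mem.head _))), by
          simp only [Fin.coe_castAdd, Fin.val_mk, true_or, or_true, if_true, lt_irrefl, lt_self_iff_false, if_false, false_or, or_false]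
          split_ifs <;> ((try simp only [iff_false, iff_true, false_iff, true_iff, ne_eq, not_not, not_true, not_false_eq_true]) <;> omega)⟩⟩
    intro x y hxy
    rw [hext] at hxy
    rcases hxy with ⟨hx, hy, hadj⟩ | hmem | hmem
    · have hne : x.val ≠ y.val := fun h => hadj.ne (by exact Fin.ext h)
      beta_reduce
      split_ifs <;> ((try simp only [iff_false, iff_true, false_iff, true_iff, ne_eq,
        not_not, not_true, not_false_eq_true]) <;> omega)
    · simp only [List.mem_cons, List.not_mem_nil, or_false, Prod.mk.injEq] at hmem
      rcases hmem with ⟨rfl, rfl⟩ | ⟨rfl, rfl⟩ | ⟨rfl, rfl⟩ | ⟨rfl, rfl⟩ | ⟨rfl, rfl⟩ |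
        ⟨rfl, rfl⟩ | ⟨rfl, rfl⟩ | ⟨rfl, rfl⟩ <;>
        · simp only [Fin.coe_castAdd, Fin.val_mk, true_or, or_true, if_true, lt_irrefl, lt_self_iff_false, if_false, false_or, or_false]
          split_ifs <;> ((try simp only [iff_false, iff_true, false_iff, true_iff, ne_eq, not_not, not_true, not_false_eq_true]) <;> omega)
    · simp only [List.mem_cons, List.not_mem_nil, or_false, Prod.mk.injEq] at hmem
      rcases hmem with ⟨rfl, rfl⟩ | ⟨rfl, rfl⟩ | ⟨rfl, rfl⟩ | ⟨rfl, rfl⟩ | ⟨rfl, rfl⟩ |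
        ⟨rfl, rfl⟩ | ⟨rfl, rfl⟩ | ⟨rfl, rfl⟩ <;>
        · simp only [Fin.coe_castAdd, Fin.val_mk, true_or, or_true, if_true, lt_irrefl, lt_self_iff_false, if_false, false_or, or_false]
          split_ifs <;> ((try simp only [iff_false, iff_true, false_iff, true_iff, ne_eq, not_not, not_true, not_false_eq_true]) <;> omega)
  | @prismTriEdge n G G' hG u v huv hext ih =>
    right
    have hune : (u : ℕ) ≠ (v : ℕ) := fun h => huv.ne (Fin.ext h)
    have hu := u.isLt
    have hv := v.isLt
    refine ⟨fun x => if x.val < n then x.val else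
          if x.val = n + 1 then (u : ℕ) else if x.val = n + 2 then (v : ℕ) else n,
        fun x => if x.val ≤ n then 0 else 1,
        ?_,
        ⟨u.castAdd 4, v.castAdd 4, hext.adj_of_adj huv, by
          simp only [Fin.coe_castAdd, Fin.val_mk, true_or, or_true, if_true, lt_irrefl, lt_self_iff_false, if_false, false_or, or_false]
          split_ifs <;> ((try simp only [iff_false, iff_true, false_iff, true_iff, ne_eq, not_not, not_true, not_false_eq_true]) <;> omega)⟩,
        ⟨u.castAdd 4, ⟨n + 1, by omega⟩, (hext _ _).2 (Or.inr (Or.inl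
          (List.Mem.tail _ (List.Mem.tail _ (List.Mem.tail _ (List.Mem.tail _
            (List.Mem.tail _ (List.Mem.head _)))))))), by
          simp only [Fin.coe_castAdd, Fin.val_mk, true_or, or_true, if_true, lt_irrefl, lt_self_iff_false, if_false, false_or, or_false]
          split_ifs <;> ((try simp only [iff_false, iff_true, false_iff, true_iff, ne_eq, not_not, not_true, not_false_eq_true]) <;> omega)⟩⟩
    intro x y hxy
    rw [hext] at hxy
    rcases hxy with ⟨hx, hy, hadj⟩ | hmem | hmem
    · have hne : x.val ≠ y.val := fun h => hadj.ne (by exact Fin.ext h)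
      beta_reduce
      split_ifs <;> ((try simp only [iff_false, iff_true, false_iff, true_iff, ne_eq,
        not_not, not_true, not_false_eq_true]) <;> omega)
    · simp only [List.mem_cons, List.not_mem_nil, or_false, Prod.mk.injEq] at hmem
      rcases hmem with ⟨rfl, rfl⟩ | ⟨rfl, rfl⟩ | ⟨rfl, rfl⟩ | ⟨rfl, rfl⟩ | ⟨rfl, rfl⟩ |
        ⟨rfl, rfl⟩ | ⟨rfl, rfl⟩ | ⟨rfl, rfl⟩ <;>
        · simp only [Fin.coe_castAdd, Fin.val_mk, true_or, or_true, if_true, lt_irrefl, lt_self_iff_false, if_false, false_or, or_false]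
          split_ifs <;> ((try simp only [iff_false, iff_true, false_iff, true_iff, ne_eq, not_not, not_true, not_false_eq_true]) <;> omega)
    · simp only [List.mem_cons, List.not_mem_nil, or_false, Prod.mk.injEq] at hmem
      rcases hmem with ⟨rfl, rfl⟩ | ⟨rfl, rfl⟩ | ⟨rfl, rfl⟩ | ⟨rfl, rfl⟩ | ⟨rfl, rfl⟩ |
        ⟨rfl, rfl⟩ | ⟨rfl, rfl⟩ | ⟨rfl, rfl⟩ <;>
        · simp only [Fin.coe_castAdd, Fin.val_mk, true_or, or_true, if_true, lt_irrefl, lt_self_iff_false, if_false, false_or, or_false]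
          split_ifs <;> ((try simp only [iff_false, iff_true, false_iff, true_iff, ne_eq, not_not, not_true, not_false_eq_true]) <;> omega)
  | @prismTriangle n G G' hG u v w huv hvw hwu hext ih =>
    right
    have hune : (u : ℕ) ≠ (v : ℕ) := fun h => huv.ne (Fin.ext h)
    have hvwne : (v : ℕ) ≠ (w : ℕ) := fun h => hvw.ne (Fin.ext h)
    have hwune : (w : ℕ) ≠ (u : ℕ) := fun h => hwu.ne (Fin.ext h)
    have hu := u.isLt
    have hv := v.isLt
    have hw := w.isLt
    refine ⟨fun x => if x.val < n then x.val else
          if x.val = n then (u : ℕ) else if x.val = n + 1 then (v : ℕ) else (w : ℕ),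
        fun x => if x.val < n then 0 else 1,
        ?_,
        ⟨u.castAdd 3, v.castAdd 3, hext.adj_of_adj huv, by
          simp only [Fin.coe_castAdd, Fin.val_mk, true_or, or_true, if_true, lt_irrefl, lt_self_iff_false, if_false, false_or, or_false]
          split_ifs <;> ((try simp only [iff_false, iff_true, false_iff, true_iff, ne_eq, not_not, not_true, not_false_eq_true]) <;> omega)⟩,
        ⟨u.castAdd 3, ⟨n, by omega⟩, (hext _ _).2 (Or.inr (Or.inl
          (List.Mem.tail _ (List.Mem.tail _ (List.Mem.tail _ (List.Mem.head _)))))), by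
          simp only [Fin.coe_castAdd, Fin.val_mk, true_or, or_true, if_true, lt_irrefl, lt_self_iff_false, if_false, false_or, or_false]
          split_ifs <;> ((try simp only [iff_false, iff_true, false_iff, true_iff, ne_eq, not_not, not_true, not_false_eq_true]) <;> omega)⟩⟩
    intro x y hxy
    rw [hext] at hxy
    rcases hxy with ⟨hx, hy, hadj⟩ | hmem | hmem
    · have hne : x.val ≠ y.val := fun h => hadj.ne (by exact Fin.ext h)
      beta_reduce
      split_ifs <;> ((try simp only [iff_false, iff_true, false_iff, true_iff, ne_eq,
        not_not, not_true, not_false_eq_true]) <;> omega)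
    · simp only [List.mem_cons, List.not_mem_nil, or_false, Prod.mk.injEq] at hmem
      rcases hmem with ⟨rfl, rfl⟩ | ⟨rfl, rfl⟩ | ⟨rfl, rfl⟩ | ⟨rfl, rfl⟩ | ⟨rfl, rfl⟩ |
        ⟨rfl, rfl⟩ <;>
        · simp only [Fin.coe_castAdd, Fin.val_mk, true_or, or_true, if_true, lt_irrefl, lt_self_iff_false, if_false, false_or, or_false]
          split_ifs <;> ((try simp only [iff_false, iff_true, false_iff, true_iff, ne_eq, not_not, not_true, not_false_eq_true]) <;> omega)
    · simp only [List.mem_cons, List.not_mem_nil, or_false, Prod.mk.injEq] at hmem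
      rcases hmem with ⟨rfl, rfl⟩ | ⟨rfl, rfl⟩ | ⟨rfl, rfl⟩ | ⟨rfl, rfl⟩ | ⟨rfl, rfl⟩ |
        ⟨rfl, rfl⟩ <;>
        · simp only [Fin.coe_castAdd, Fin.val_mk, true_or, or_true, if_true, lt_irrefl, lt_self_iff_false, if_false, false_or, or_false]
          split_ifs <;> ((try simp only [iff_false, iff_true, false_iff, true_iff, ne_eq, not_not, not_true, not_false_eq_true]) <;> omega)

end NAC

open NAC in
/-- Every graph in `𝒢_sc` that is not a 2-tree admits a NAC-colouring. -/
theorem statement9 {n : ℕ} (G : SimpleGraph (Fin n)) (hG : GSC G)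
    (h2t : ¬ ∃ (m : ℕ) (H : SimpleGraph (Fin m)), IsTwoTree H ∧ Nonempty (G ≃g H)) :
    ∃ c : G.edgeSet → Bool, IsNAC G c := by
  rcases gsc_good hG with htt | hgood
  · exact (h2t ⟨n, G, htt, ⟨SimpleGraph.Iso.refl⟩⟩).elim
  · exact good_isNAC hgood
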